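/- arXiv:2512.01305 — 8 statements merged into one kernel-verified Lean document; each statement's English description precedes it below -/
import Mathlib

section
/- Let G be a group and φ : G → ℝ a group homomorphism into the additive reals. Let a, b be nonzero elements of MonoidAlgebra ℤ G. If a*b ≠ 0, then δ_φ(a*b) ≥ δ_φ(a) + δ_φ(b). Moreover, if L_φ(a) * L_φ(b) ≠ 0, then a*b ≠ 0, δ_φ(a*b) = δ_φ(a) + δ_φ(b), and L_φ(a*b) = L_φ(a) * L_φ(b). -/
open scoped Classical

/-- For a nonzero `a` in the integral group ring, `deltaPhi φ a` is the minimum of `φ`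
over the (finite, nonempty) support of `a`; junk value `0` for `a = 0`. -/
noncomputable def deltaPhi {G : Type*} [Group G] (φ : G → ℝ)
    (a : MonoidAlgebra ℤ G) : ℝ :=
  if h : a.coeff.support.Nonempty then a.coeff.support.inf' h φ else 0

/-- The `φ`-leading term of `a`: the restriction of `a` to the elements `g` of its support
with `φ g = deltaPhi φ a`.  For `a = 0` this gives `0`. -/
noncomputable def leadPhi {G : Type*} [Group G] (φ : G → ℝ)
    (a : MonoidAlgebra ℤ G) : MonoidAlgebra ℤ G :=
  MonoidAlgebra.ofCoeff (Finsupp.filter (fun g => φ g = deltaPhi φ a) a.coeff)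

/-!
Every monomial `x * y` of `a * b` has `φ (x * y) = φ x + φ y ≥ δ_φ(a) + δ_φ(b)`, with equality
only when both `x` and `y` are `φ`-leading. Hence `a * b` and `L_φ(a) * L_φ(b)` have the same
coefficients on `{g | φ g ≤ δ_φ(a) + δ_φ(b)}`, while `L_φ(a) * L_φ(b)` is supported on the level
set `φ = δ_φ(a) + δ_φ(b)`. So when `L_φ(a) * L_φ(b) ≠ 0` it is exactly the part of `a * b` on
its lowest level.
-/

section LeadingTerm

variable {G : Type*} [Group G] {φ : G → ℝ} {a b : MonoidAlgebra ℤ G} {g x y : G}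

theorem deltaPhi_le (hg : g ∈ a.coeff.support) : deltaPhi φ a ≤ φ g := by
  rw [deltaPhi, dif_pos ⟨g, hg⟩]
  exact Finset.inf'_le φ hg

theorem le_deltaPhi {c : ℝ} (ha : a ≠ 0) (h : ∀ g ∈ a.coeff.support, c ≤ φ g) :
    c ≤ deltaPhi φ a := by
  have hne : a.coeff.support.Nonempty :=
    Finsupp.support_nonempty_iff.mpr (mt MonoidAlgebra.coeff_eq_zero.mp ha)
  rw [deltaPhi, dif_pos hne]
  exact Finset.le_inf' hne φ h

theorem coeff_leadPhi (g : G) :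
    (leadPhi φ a).coeff g = if φ g = deltaPhi φ a then a.coeff g else 0 :=
  Finsupp.filter_apply _ _ _

theorem mem_support_leadPhi :
    g ∈ (leadPhi φ a).coeff.support ↔ g ∈ a.coeff.support ∧ φ g = deltaPhi φ a := by
  rw [leadPhi, MonoidAlgebra.coeff_ofCoeff, Finsupp.support_filter, Finset.mem_filter]

theorem support_leadPhi_subset : (leadPhi φ a).coeff.support ⊆ a.coeff.support :=
  fun _ hg => (mem_support_leadPhi.mp hg).1

theorem coeff_mul_coeff_eq_coeff_leadPhi_mul_coeff_leadPhi
    (hxy : φ x + φ y ≤ deltaPhi φ a + deltaPhi φ b) :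
    a.coeff x * b.coeff y = (leadPhi φ a).coeff x * (leadPhi φ b).coeff y := by
  by_cases hx : a.coeff x = 0
  · simp [coeff_leadPhi, hx]
  by_cases hy : b.coeff y = 0
  · simp [coeff_leadPhi, hy]
  have hδx := deltaPhi_le (φ := φ) (Finsupp.mem_support_iff.mpr hx)
  have hδy := deltaPhi_le (φ := φ) (Finsupp.mem_support_iff.mpr hy)
  rw [coeff_leadPhi, coeff_leadPhi, if_pos (by linarith), if_pos (by linarith)]

variable (hφ : ∀ g h : G, φ (g * h) = φ g + φ h)
include hφ

theorem exists_apply_eq_add_of_mem_support_mul (hg : g ∈ (a * b).coeff.support) :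
    ∃ x ∈ a.coeff.support, ∃ y ∈ b.coeff.support, φ g = φ x + φ y := by
  obtain ⟨x, hx, y, hy, rfl⟩ := Finset.mem_mul.mp (MonoidAlgebra.support_coeff_mul_subset _ _ hg)
  exact ⟨x, hx, y, hy, hφ x y⟩

theorem deltaPhi_add_deltaPhi_le_deltaPhi_mul (hab : a * b ≠ 0) :
    deltaPhi φ a + deltaPhi φ b ≤ deltaPhi φ (a * b) := by
  refine le_deltaPhi hab fun g hg => ?_
  obtain ⟨x, hx, y, hy, hg⟩ := exists_apply_eq_add_of_mem_support_mul hφ hg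
  rw [hg]
  exact add_le_add (deltaPhi_le hx) (deltaPhi_le hy)

theorem apply_eq_of_mem_support_leadPhi_mul
    (hg : g ∈ (leadPhi φ a * leadPhi φ b).coeff.support) :
    φ g = deltaPhi φ a + deltaPhi φ b := by
  obtain ⟨x, hx, y, hy, hg⟩ := exists_apply_eq_add_of_mem_support_mul hφ hg
  rw [hg, (mem_support_leadPhi.mp hx).2, (mem_support_leadPhi.mp hy).2]

theorem coeff_mul_eq_coeff_leadPhi_mul (hg : φ g ≤ deltaPhi φ a + deltaPhi φ b) :
    (a * b).coeff g = (leadPhi φ a * leadPhi φ b).coeff g := by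
  simp only [MonoidAlgebra.coeff_mul]
  rw [Finsupp.sum_of_support_subset _ support_leadPhi_subset _ (by simp)]
  refine Finset.sum_congr rfl fun x _ => ?_
  rw [Finsupp.sum_of_support_subset _ support_leadPhi_subset _ (by simp)]
  refine Finset.sum_congr rfl fun y _ => ?_
  by_cases hxy : x * y = g
  · simp only [if_pos hxy]
    exact coeff_mul_coeff_eq_coeff_leadPhi_mul_coeff_leadPhi (by rw [← hφ, hxy]; exact hg)
  · simp only [if_neg hxy]

theorem mem_support_mul_of_mem_support_leadPhi_mul
    (hg : g ∈ (leadPhi φ a * leadPhi φ b).coeff.support) : g ∈ (a * b).coeff.support := by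
  rw [Finsupp.mem_support_iff,
    coeff_mul_eq_coeff_leadPhi_mul hφ (apply_eq_of_mem_support_leadPhi_mul hφ hg).le]
  exact Finsupp.mem_support_iff.mp hg

theorem leadPhi_mul_of_deltaPhi_mul_eq
    (hδ : deltaPhi φ (a * b) = deltaPhi φ a + deltaPhi φ b) :
    leadPhi φ (a * b) = leadPhi φ a * leadPhi φ b := by
  refine MonoidAlgebra.coeff_injective (Finsupp.ext fun g => ?_)
  rw [coeff_leadPhi, hδ]
  split_ifs with hg
  · exact coeff_mul_eq_coeff_leadPhi_mul hφ hg.le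
  · exact (Finsupp.notMem_support_iff.mp
      fun hmem => hg (apply_eq_of_mem_support_leadPhi_mul hφ hmem)).symm

end LeadingTerm

theorem deltaPhi_leadPhi_mul_general {G : Type*} [Group G] (φ : G → ℝ)
    (hφ : ∀ g h : G, φ (g * h) = φ g + φ h)
    (a b : MonoidAlgebra ℤ G) :
    (a * b ≠ 0 → deltaPhi φ (a * b) ≥ deltaPhi φ a + deltaPhi φ b) ∧
    (leadPhi φ a * leadPhi φ b ≠ 0 →
      a * b ≠ 0 ∧ deltaPhi φ (a * b) = deltaPhi φ a + deltaPhi φ b ∧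
        leadPhi φ (a * b) = leadPhi φ a * leadPhi φ b) := by
  refine ⟨deltaPhi_add_deltaPhi_le_deltaPhi_mul hφ, fun hL => ?_⟩
  obtain ⟨g₀, hg₀⟩ := Finsupp.support_nonempty_iff.mpr (mt MonoidAlgebra.coeff_eq_zero.mp hL)
  have hg₀ab := mem_support_mul_of_mem_support_leadPhi_mul hφ hg₀
  have hab : a * b ≠ 0 := by rintro h; simp [h] at hg₀ab
  have hδ : deltaPhi φ (a * b) = deltaPhi φ a + deltaPhi φ b :=
    le_antisymm (apply_eq_of_mem_support_leadPhi_mul hφ hg₀ ▸ deltaPhi_le hg₀ab)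
      (deltaPhi_add_deltaPhi_le_deltaPhi_mul hφ hab)
  exact ⟨hab, hδ, leadPhi_mul_of_deltaPhi_mul_eq hφ hδ⟩

/-- Multiplicativity properties of `δ_φ` and `L_φ` on the integral group ring. -/
theorem deltaPhi_leadPhi_mul {G : Type*} [Group G] (φ : G → ℝ)
    (hφ : ∀ g h : G, φ (g * h) = φ g + φ h)
    (a b : MonoidAlgebra ℤ G) (ha : a ≠ 0) (hb : b ≠ 0) :
    (a * b ≠ 0 → deltaPhi φ (a * b) ≥ deltaPhi φ a + deltaPhi φ b) ∧
    (leadPhi φ a * leadPhi φ b ≠ 0 →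
      a * b ≠ 0 ∧ deltaPhi φ (a * b) = deltaPhi φ a + deltaPhi φ b ∧
        leadPhi φ (a * b) = leadPhi φ a * leadPhi φ b) :=
  deltaPhi_leadPhi_mul_general φ hφ a b
end

section
/- Let G be a group and φ : G → ℝ a group homomorphism into the additive reals. Let A be an l × m matrix and B an m × p matrix over MonoidAlgebra ℤ G such that A * B = 0. Then L_φ(A) * L_φ(B) = 0. -/
open scoped Classical

/-- `deltaMat φ A` is the minimum of `deltaPhi φ` over the nonzero entries of the
matrix `A`; junk value `0` for the zero matrix. -/
noncomputable def deltaMat {G : Type*} [Group G] (φ : G → ℝ)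
    {l m : Type*} [Fintype l] [Fintype m]
    (A : Matrix l m (MonoidAlgebra ℤ G)) : ℝ :=
  if h : ((Finset.univ : Finset (l × m)).filter fun p => A p.1 p.2 ≠ 0).Nonempty then
    (((Finset.univ : Finset (l × m)).filter fun p => A p.1 p.2 ≠ 0).inf' h
      fun p => deltaPhi φ (A p.1 p.2))
  else 0

/-- The leading matrix `L_φ(A)`: the `(i,j)` entry is the restriction of `A i j` to the
group elements `g` with `φ g = deltaMat φ A`. -/
noncomputable def leadMat {G : Type*} [Group G] (φ : G → ℝ)
    {l m : Type*} [Fintype l] [Fintype m]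
    (A : Matrix l m (MonoidAlgebra ℤ G)) : Matrix l m (MonoidAlgebra ℤ G) :=
  Matrix.of fun i j => MonoidAlgebra.ofCoeff (Finsupp.filter (fun g => φ g = deltaMat φ A) (A i j).coeff)

/-! If every element in the support of `x` has `φ ≥ d` and every one in the support of `y` has
`φ ≥ e`, then the part of `x * y` at level `d + e` is the product of the level-`d` part of `x`
with the level-`e` part of `y`: since `φ` is additive, `φ g₁ + φ g₂ = d + e` forces
`φ g₁ = d` and `φ g₂ = e`. Applied entrywise with `d = δ_φ(A)` and `e = δ_φ(B)`, this shows that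
`L_φ(A) * L_φ(B)` is the level-`(δ_φ(A) + δ_φ(B))` part of `A * B = 0`. -/

namespace MonoidAlgebra

variable {R G M : Type*} [Semiring R]

noncomputable def levelPart (φ : G → M) (d : M) : R[G] →+ R[G] :=
  (coeffAddEquiv (R := R) (M := G)).symm.toAddMonoidHom.comp
    ((Finsupp.filterAddHom (φ · = d)).comp coeffAddEquiv.toAddMonoidHom)

theorem coeff_levelPart (φ : G → M) (d : M) (a : R[G]) :
    (levelPart φ d a).coeff = a.coeff.filter (φ · = d) :=
  rfl

theorem eq_of_mem_support_levelPart {φ : G → M} {d : M} {a : R[G]} {g : G}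
    (hg : g ∈ (levelPart φ d a).coeff.support) : φ g = d := by
  rw [coeff_levelPart, Finsupp.support_filter] at hg
  exact (Finset.mem_filter.1 hg).2

theorem levelPart_eq_self {φ : G → M} {d : M} {a : R[G]}
    (h : ∀ g ∈ a.coeff.support, φ g = d) : levelPart φ d a = a := by
  rw [← coeff_inj, coeff_levelPart, Finsupp.filter_eq_self_iff]
  exact fun g hg => h g (Finsupp.mem_support_iff.2 hg)

theorem levelPart_eq_zero {φ : G → M} {d : M} {a : R[G]}
    (h : ∀ g ∈ a.coeff.support, φ g ≠ d) : levelPart φ d a = 0 := by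
  rw [← coeff_inj, coeff_levelPart, coeff_zero, Finsupp.filter_eq_zero_iff]
  exact fun g hg => by_contra fun ha => h g (Finsupp.mem_support_iff.2 ha) hg

theorem exists_eq_levelPart_add [PartialOrder M] {φ : G → M} {d : M} {a : R[G]}
    (ha : ∀ g ∈ a.coeff.support, d ≤ φ g) :
    ∃ a', a = levelPart φ d a + a' ∧ ∀ g ∈ a'.coeff.support, d < φ g := by
  refine ⟨ofCoeff (a.coeff.filter (φ · ≠ d)), ?_, fun g hg => ?_⟩
  · rw [← coeff_inj, coeff_add, coeff_levelPart, coeff_ofCoeff,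
      Finsupp.filter_add_filter_not]
  · rw [coeff_ofCoeff, Finsupp.support_filter, Finset.mem_filter] at hg
    exact (ha g hg.1).lt_of_ne' hg.2

section Mul

variable [Mul G]

theorem forall_mem_support_mul {P : G → Prop} {x y : R[G]}
    (h : ∀ g₁ ∈ x.coeff.support, ∀ g₂ ∈ y.coeff.support, P (g₁ * g₂)) :
    ∀ g ∈ (x * y).coeff.support, P g := by
  intro g hg
  obtain ⟨g₁, h₁, g₂, h₂, rfl⟩ := Finset.mem_mul.1 (support_coeff_mul_subset x y hg)
  exact h g₁ h₁ g₂ h₂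

variable [AddCommMonoid M] {φ : G → M} (hφ : ∀ g h : G, φ (g * h) = φ g + φ h)
  {d e : M} {x y : R[G]}
include hφ

theorem levelPart_add_mul_of_eq (hx : ∀ g ∈ x.coeff.support, φ g = d)
    (hy : ∀ g ∈ y.coeff.support, φ g = e) : levelPart φ (d + e) (x * y) = x * y :=
  levelPart_eq_self <| forall_mem_support_mul fun g₁ h₁ g₂ h₂ => by
    rw [hφ, hx g₁ h₁, hy g₂ h₂]

variable [PartialOrder M] [IsOrderedCancelAddMonoid M]

theorem levelPart_add_mul_of_lt_left (hx : ∀ g ∈ x.coeff.support, d < φ g)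
    (hy : ∀ g ∈ y.coeff.support, e ≤ φ g) : levelPart φ (d + e) (x * y) = 0 :=
  levelPart_eq_zero <| forall_mem_support_mul fun g₁ h₁ g₂ h₂ => by
    rw [hφ]; exact (add_lt_add_of_lt_of_le (hx g₁ h₁) (hy g₂ h₂)).ne'

theorem levelPart_add_mul_of_lt_right (hx : ∀ g ∈ x.coeff.support, d ≤ φ g)
    (hy : ∀ g ∈ y.coeff.support, e < φ g) : levelPart φ (d + e) (x * y) = 0 :=
  levelPart_eq_zero <| forall_mem_support_mul fun g₁ h₁ g₂ h₂ => by
    rw [hφ]; exact (add_lt_add_of_le_of_lt (hx g₁ h₁) (hy g₂ h₂)).ne'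

theorem levelPart_add_mul (hx : ∀ g ∈ x.coeff.support, d ≤ φ g)
    (hy : ∀ g ∈ y.coeff.support, e ≤ φ g) :
    levelPart φ (d + e) (x * y) = levelPart φ d x * levelPart φ e y := by
  obtain ⟨x', hx_eq, hx'⟩ := exists_eq_levelPart_add hx
  obtain ⟨y', hy_eq, hy'⟩ := exists_eq_levelPart_add hy
  have hxL : ∀ g ∈ (levelPart φ d x).coeff.support, φ g = d :=
    fun _ => eq_of_mem_support_levelPart
  have hyL : ∀ g ∈ (levelPart φ e y).coeff.support, φ g = e :=
    fun _ => eq_of_mem_support_levelPart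
  have hsplit : x * y = levelPart φ d x * levelPart φ e y + levelPart φ d x * y' + x' * y := by
    rw [← mul_add, ← hy_eq, ← add_mul, ← hx_eq]
  calc levelPart φ (d + e) (x * y)
      = levelPart φ (d + e) (levelPart φ d x * levelPart φ e y)
        + levelPart φ (d + e) (levelPart φ d x * y')
        + levelPart φ (d + e) (x' * y) := by
        rw [hsplit, map_add, map_add]
    _ = levelPart φ d x * levelPart φ e y := by
      rw [levelPart_add_mul_of_eq hφ hxL hyL,
        levelPart_add_mul_of_lt_right hφ (fun g hg => (hxL g hg).ge) hy',
        levelPart_add_mul_of_lt_left hφ hx' hy, add_zero, add_zero]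

theorem map_levelPart_mul_map_levelPart {l m p : Type*} [Fintype m]
    {A : Matrix l m R[G]} {B : Matrix m p R[G]}
    (hA : ∀ i j, ∀ g ∈ (A i j).coeff.support, d ≤ φ g)
    (hB : ∀ j k, ∀ g ∈ (B j k).coeff.support, e ≤ φ g) :
    A.map (levelPart φ d) * B.map (levelPart φ e) = (A * B).map (levelPart φ (d + e)) := by
  ext i k : 1
  simp only [Matrix.mul_apply, Matrix.map_apply, map_sum]
  exact Finset.sum_congr rfl fun j _ => (levelPart_add_mul hφ (hA i j) (hB j k)).symm

end Mul

end MonoidAlgebra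

open MonoidAlgebra

section LeadingTerms

variable {G : Type*} [Group G] (φ : G → ℝ)

theorem deltaPhi_le_of_mem_support {a : MonoidAlgebra ℤ G} {g : G} (hg : g ∈ a.coeff.support) :
    deltaPhi φ a ≤ φ g := by
  rw [deltaPhi, dif_pos ⟨g, hg⟩]
  exact Finset.inf'_le _ hg

variable {l m : Type*} [Fintype l] [Fintype m]

theorem deltaMat_le_deltaPhi {A : Matrix l m (MonoidAlgebra ℤ G)} {i : l} {j : m}
    (hij : A i j ≠ 0) : deltaMat φ A ≤ deltaPhi φ (A i j) := by
  have hmem : (i, j) ∈ (Finset.univ : Finset (l × m)).filter fun p => A p.1 p.2 ≠ 0 :=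
    Finset.mem_filter.2 ⟨Finset.mem_univ _, hij⟩
  rw [deltaMat, dif_pos ⟨_, hmem⟩]
  exact Finset.inf'_le _ hmem

theorem deltaMat_le_of_mem_support (A : Matrix l m (MonoidAlgebra ℤ G)) (i : l) (j : m) {g : G}
    (hg : g ∈ (A i j).coeff.support) : deltaMat φ A ≤ φ g :=
  (deltaMat_le_deltaPhi φ fun h => by simp [h] at hg).trans (deltaPhi_le_of_mem_support φ hg)

theorem leadMat_eq_map (A : Matrix l m (MonoidAlgebra ℤ G)) :
    leadMat φ A = A.map (levelPart φ (deltaMat φ A)) :=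
  rfl

end LeadingTerms

/-- If `A * B = 0` then the leading matrices satisfy `L_φ(A) * L_φ(B) = 0`. -/
theorem leadMat_mul_eq_zero {G : Type*} [Group G] (φ : G → ℝ)
    (hφ : ∀ g h : G, φ (g * h) = φ g + φ h)
    {l m p : Type*} [Fintype l] [Fintype m] [Fintype p]
    (A : Matrix l m (MonoidAlgebra ℤ G)) (B : Matrix m p (MonoidAlgebra ℤ G))
    (h : A * B = 0) :
    leadMat φ A * leadMat φ B = 0 := by
  rw [leadMat_eq_map, leadMat_eq_map,
    map_levelPart_mul_map_levelPart hφ (deltaMat_le_of_mem_support φ A)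
      (deltaMat_le_of_mem_support φ B), h, Matrix.map_zero _ (map_zero _)]
end

section
/- Let d ≥ 1, let S be a finite set of vectors in ℤ^d (functions Fin d → ℤ), let φ : Fin d → ℝ, and let ε > 0. Then there exists ψ : Fin d → ℚ with |ψ i − φ i| < ε for every i, such that for all h, h′ ∈ S: if Σ_i φ i · (h i) < Σ_i φ i · (h′ i) then Σ_i ψ i · (h i) < Σ_i ψ i · (h′ i), and if Σ_i φ i · (h i) = Σ_i φ i · (h′ i) then Σ_i ψ i · (h i) = Σ_i ψ i · (h′ i). -/
/-!
Write the coordinates of `φ` as rational combinations `φ = C b` of a `ℚ`-linearly independent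
family `b` of reals. For every real `x`, the functional `C x` pairs with a lattice point `h` as
`x ⬝ᵥ (h ᵥ* C)` with `h ᵥ* C` rational, so by the independence of `b` every equality
`φ ⬝ᵥ h = φ ⬝ᵥ h'` persists for all `C x`. Strict inequalities and `ε`-closeness to `φ` are
open conditions at `x = b`, so a rational `x` near `b` gives the rational `ψ = C x`.
-/
open Matrix Filter Topology

theorem exists_linearIndependent_sum_smul_eq (K : Type*) {V ι : Type*} [DivisionRing K]
    [AddCommGroup V] [Module K V] [Finite ι] (v : ι → V) :
    ∃ (n : ℕ) (b : Fin n → V) (C : Matrix ι (Fin n) K),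
      LinearIndependent K b ∧ ∀ i, ∑ j, C i j • b j = v i := by
  let W := Submodule.span K (Set.range v)
  have : FiniteDimensional K W := FiniteDimensional.span_of_finite K (Set.finite_range v)
  have hv : ∀ i, v i ∈ W := fun i => Submodule.subset_span ⟨i, rfl⟩
  let B := Module.finBasis K W
  refine ⟨_, fun j => B j, fun i j => B.repr ⟨v i, hv i⟩ j,
    B.linearIndependent.map' W.subtype W.ker_subtype, fun i => ?_⟩
  have := congrArg W.subtype (B.sum_repr ⟨v i, hv i⟩)
  simp only [map_sum, map_smul] at this
  exact this

theorem exists_ratCast_of_eventually {κ : Type*} {p : (κ → ℝ) → Prop} {b : κ → ℝ}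
    (hp : ∀ᶠ x in 𝓝 b, p x) : ∃ q : κ → ℚ, p (Rat.cast ∘ q) := by
  obtain ⟨_, ⟨q, rfl⟩, hq⟩ :=
    (DenseRange.piMap fun _ => Rat.denseRange_cast (𝕜 := ℝ)).inter_nhds_nonempty hp
  exact ⟨q, hq⟩

variable {ι κ : Type*} [Fintype ι] [Fintype κ]

theorem ratCast_mulVec_dotProduct (C : Matrix ι κ ℚ) (x : κ → ℝ) (u : ι → ℚ) :
    (C.map (↑) *ᵥ x) ⬝ᵥ (Rat.cast ∘ u) = ∑ j, (u ᵥ* C) j • x j := by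
  rw [dotProduct_comm, dotProduct_mulVec, dotProduct]
  refine Finset.sum_congr rfl fun j _ => ?_
  rw [Rat.smul_def]
  exact congrArg (· * x j) (RingHom.map_vecMul (Rat.castHom ℝ) C u j).symm

theorem mulVec_dotProduct_eq_of_linearIndependent {C : Matrix ι κ ℚ} {b : κ → ℝ}
    (hb : LinearIndependent ℚ b) {u v : ι → ℚ}
    (huv : (C.map (↑) *ᵥ b) ⬝ᵥ (Rat.cast ∘ u) = (C.map (↑) *ᵥ b) ⬝ᵥ (Rat.cast ∘ v))
    (x : κ → ℝ) :
    (C.map (↑) *ᵥ x) ⬝ᵥ (Rat.cast ∘ u) = (C.map (↑) *ᵥ x) ⬝ᵥ (Rat.cast ∘ v) := by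
  rw [ratCast_mulVec_dotProduct, ratCast_mulVec_dotProduct] at huv ⊢
  rw [funext (Fintype.linearIndependent_iffₛ.1 hb _ _ huv)]

theorem eventually_dotProduct_lt {φ v w : ι → ℝ} (h : φ ⬝ᵥ v < φ ⬝ᵥ w) :
    ∀ᶠ ψ in 𝓝 φ, ψ ⬝ᵥ v < ψ ⬝ᵥ w :=
  (continuous_id.dotProduct continuous_const).continuousAt.eventually_lt
    (continuous_id.dotProduct continuous_const).continuousAt h

theorem exists_rat_approx_same_order_general (d : ℕ)
    (S : Finset (Fin d → ℤ)) (φ : Fin d → ℝ) (ε : ℝ) (hε : 0 < ε) :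
    ∃ ψ : Fin d → ℚ, (∀ i : Fin d, |(ψ i : ℝ) - φ i| < ε) ∧
      ∀ h ∈ S, ∀ h' ∈ S,
        ((∑ i : Fin d, φ i * (h i : ℝ)) < (∑ i : Fin d, φ i * (h' i : ℝ)) →
          (∑ i : Fin d, (ψ i : ℝ) * (h i : ℝ)) < (∑ i : Fin d, (ψ i : ℝ) * (h' i : ℝ))) ∧
        ((∑ i : Fin d, φ i * (h i : ℝ)) = (∑ i : Fin d, φ i * (h' i : ℝ)) →
          (∑ i : Fin d, (ψ i : ℝ) * (h i : ℝ)) = (∑ i : Fin d, (ψ i : ℝ) * (h' i : ℝ))) := by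
  obtain ⟨n, b, C, hb, hCb⟩ := exists_linearIndependent_sum_smul_eq ℚ φ
  have hφ : C.map (↑) *ᵥ b = φ := funext fun i => by
    simpa [mulVec, dotProduct, Rat.smul_def] using hCb i
  have hpair : ∀ (ψ : Fin d → ℝ) (h : Fin d → ℤ),
      ∑ i, ψ i * (h i : ℝ) = ψ ⬝ᵥ (Rat.cast ∘ fun i => (h i : ℚ)) := fun ψ h => by
    simp [dotProduct]
  simp only [hpair]
  have hF : Tendsto (fun x => C.map (↑) *ᵥ x) (𝓝 b) (𝓝 φ) :=
    hφ ▸ (continuous_const.matrix_mulVec continuous_id).tendsto b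
  have hnear : ∀ᶠ ψ in 𝓝 φ, (∀ i, |ψ i - φ i| < ε) ∧ ∀ h ∈ S, ∀ h' ∈ S,
      φ ⬝ᵥ (Rat.cast ∘ fun i => (h i : ℚ)) < φ ⬝ᵥ (Rat.cast ∘ fun i => (h' i : ℚ)) →
        ψ ⬝ᵥ (Rat.cast ∘ fun i => (h i : ℚ)) < ψ ⬝ᵥ (Rat.cast ∘ fun i => (h' i : ℚ)) :=
    (eventually_all.2 fun i => ((continuous_apply i).tendsto φ).eventually
        (eventually_abs_sub_lt (φ i) hε)).and <|
      (eventually_all_finset S).2 fun h _ => (eventually_all_finset S).2 fun h' _ =>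
        eventually_imp_distrib_left.2 eventually_dotProduct_lt
  obtain ⟨q, hq_near, hq_lt⟩ := exists_ratCast_of_eventually (hF.eventually hnear)
  have hψ : ∀ i, ((C *ᵥ q) i : ℝ) = (C.map (↑) *ᵥ (Rat.cast ∘ q)) i :=
    RingHom.map_mulVec (Rat.castHom ℝ) C q
  refine ⟨C *ᵥ q, ?_⟩
  simp only [hψ]
  exact ⟨hq_near, fun h hh h' hh' => ⟨hq_lt h hh h' hh',
    fun heq => mulVec_dotProduct_eq_of_linearIndependent hb (hφ ▸ heq) _⟩⟩

/-- Rational approximation of a real linear functional preserving the induced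
(strict and equality) ordering on a fixed finite set of lattice points. -/
theorem exists_rat_approx_same_order (d : ℕ) (hd : 1 ≤ d)
    (S : Finset (Fin d → ℤ)) (φ : Fin d → ℝ) (ε : ℝ) (hε : 0 < ε) :
    ∃ ψ : Fin d → ℚ, (∀ i : Fin d, |(ψ i : ℝ) - φ i| < ε) ∧
      ∀ h ∈ S, ∀ h' ∈ S,
        ((∑ i : Fin d, φ i * (h i : ℝ)) < (∑ i : Fin d, φ i * (h' i : ℝ)) →
          (∑ i : Fin d, (ψ i : ℝ) * (h i : ℝ)) < (∑ i : Fin d, (ψ i : ℝ) * (h' i : ℝ))) ∧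
        ((∑ i : Fin d, φ i * (h i : ℝ)) = (∑ i : Fin d, φ i * (h' i : ℝ)) →
          (∑ i : Fin d, (ψ i : ℝ) * (h i : ℝ)) = (∑ i : Fin d, (ψ i : ℝ) * (h' i : ℝ))) :=
  exists_rat_approx_same_order_general d S φ ε hε
end

section
/- Let G be a group, L a subgroup of G, d ≥ 1, and g : Fin d → G a complete transversal of the right cosets of L, i.e., the map L × Fin d → G, (l, k) ↦ l * g k, is a bijection. Then: (a) for every z ∈ MonoidAlgebra ℤ G and every k : Fin d there exist unique elements Λ(z) k j ∈ MonoidAlgebra ℤ L (for j : Fin d) such that (single (g k) 1) * z = Σ_j ι(Λ(z) k j) * (single (g j) 1), where ι : MonoidAlgebra ℤ L → MonoidAlgebra ℤ G is the ring embedding induced by the inclusion L ≤ G; (b) the resulting map Λ : MonoidAlgebra ℤ G → Matrix (Fin d) (Fin d) (MonoidAlgebra ℤ L) is a ring homomorphism, i.e., Λ(z₁ + z₂) = Λ(z₁) + Λ(z₂), Λ(z₁ * z₂) = Λ(z₁) * Λ(z₂), and Λ(1) = 1; (c) for every h ∈ G, each row and each column of Λ(single h 1) contains exactly one nonzero entry,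 and that entry equals single l 1 for some l ∈ L. -/
/-!
Every `x : G` is uniquely `l * g j` with `l : L`, so `R[G]` is a free left `R[L]`-module on the
elements `single (g j) 1`, the `j`-th coordinate of `z` being its restriction to the coset
`L * g j`, transported to `L` (`cosetCoeff`). Row `k` of `Λ z` consists of the coordinates of
`single (g k) 1 * z`; uniqueness of coordinates gives the expansion and makes `Λ` multiplicative.
For `z = single h 1`, row `k` is `single l 1` at the unique `j` with `l * g j = g k * h`, and since
right multiplication by `h` permutes the right cosets, each column also has exactly one such entry.
-/

open scoped Matrix

namespace Subgroup

variable {G ι : Type*} [Group G] {L : Subgroup G} {g : ι → G}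

lemma existsUnique_transversal_index
    (hg : Function.Bijective fun p : L × ι => (p.1 : G) * g p.2) (x : G) :
    ∃! j, ∃ l : L, (l : G) * g j = x := by
  obtain ⟨⟨l, j⟩, hlj⟩ := hg.2 x
  refine ⟨j, ⟨l, hlj⟩, ?_⟩
  rintro j' ⟨l', hl'⟩
  exact congrArg Prod.snd (hg.1 (hl'.trans hlj.symm) : ((l', j') : L × ι) = (l, j))

lemma bijective_transversal_mul_right
    (hg : Function.Bijective fun p : L × ι => (p.1 : G) * g p.2) (h : G) :
    Function.Bijective fun p : L × ι => (p.1 : G) * (g p.2 * h) := by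
  simpa only [Function.comp_def, Equiv.coe_mulRight, mul_assoc] using
    (Equiv.mulRight h).bijective.comp hg

lemma existsUnique_transversal_index_mul_right
    (hg : Function.Bijective fun p : L × ι => (p.1 : G) * g p.2) (h : G) (j : ι) :
    ∃! k, ∃ l : L, (l : G) * g j = g k * h := by
  have hcolumn := existsUnique_transversal_index (g := (g · * h))
    (bijective_transversal_mul_right hg h) (g j)
  refine (existsUnique_congr fun k => ?_).mp hcolumn
  constructor <;> rintro ⟨l, hl⟩ <;>
    exact ⟨l⁻¹, by rw [← hl, coe_inv, inv_mul_cancel_left]⟩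

end Subgroup

namespace MonoidAlgebra

variable {R G ι : Type*} [Semiring R] [Group G] (L : Subgroup G) (g : ι → G)

noncomputable def cosetCoeff (j : ι) : R[G] →+ R[L] :=
  comapDomainAddMonoidHom (fun l : L => (l : G) * g j)
    ((mul_left_injective (g j)).comp Subtype.val_injective)

@[simp]
lemma coeff_cosetCoeff (j : ι) (z : R[G]) (l : L) :
    (cosetCoeff L g j z).coeff l = z.coeff ((l : G) * g j) := rfl

variable {L g}

lemma cosetCoeff_mapDomain_mul_single [DecidableEq ι]
    (hinj : Function.Injective fun p : L × ι => (p.1 : G) * g p.2) (c : R[L]) (i j : ι) :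
    cosetCoeff L g j (mapDomainRingHom R L.subtype c * single (g i) 1) =
      if i = j then c else 0 := by
  ext l
  rw [coeff_cosetCoeff, coeff_mul_single_apply, mul_one, mapDomainRingHom_apply, coeff_mapDomain]
  split_ifs with hij
  · subst hij
    rw [mul_inv_cancel_right]
    exact Finsupp.mapDomain_apply Subtype.val_injective _ l
  · refine Finsupp.mapDomain_of_notMem_range _ _ ?_
    rintro ⟨l', hl'⟩
    have hcoset : ((l', i) : L × ι) = (l, j) := hinj (eq_mul_inv_iff_mul_eq.mp hl')
    exact hij (congrArg Prod.snd hcoset)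

variable (L g) in
noncomputable def restrictionMatrix (z : R[G]) : Matrix ι ι R[L] :=
  Matrix.of fun k j => cosetCoeff L g j (single (g k) 1 * z)

lemma restrictionMatrix_add (z₁ z₂ : R[G]) :
    restrictionMatrix L g (z₁ + z₂) =
      restrictionMatrix L g z₁ + restrictionMatrix L g z₂ := by
  ext k j
  simp only [restrictionMatrix, Matrix.of_apply, Matrix.add_apply, mul_add, map_add]

variable [Fintype ι]

lemma sum_mapDomain_pi_single_mul_single [DecidableEq ι] (j : ι) (c : R[L]) :
    ∑ i, mapDomainRingHom R L.subtype ((Pi.single j c : ι → R[L]) i) * single (g i) 1 =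
      mapDomainRingHom R L.subtype c * single (g j) 1 := by
  refine (Fintype.sum_eq_single j fun i hi => ?_).trans ?_
  · rw [Pi.single_eq_of_ne hi, map_zero, zero_mul]
  · rw [Pi.single_eq_same]

lemma cosetCoeff_sum_mapDomain_mul_single
    (hinj : Function.Injective fun p : L × ι => (p.1 : G) * g p.2) (c : ι → R[L]) (j : ι) :
    cosetCoeff L g j (∑ i, mapDomainRingHom R L.subtype (c i) * single (g i) 1) = c j := by
  classical
  simp only [map_sum, cosetCoeff_mapDomain_mul_single hinj, Finset.sum_ite_eq',
    Finset.mem_univ, if_true]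

lemma exists_eq_sum_mapDomain_mul_single
    (hsurj : Function.Surjective fun p : L × ι => (p.1 : G) * g p.2) (z : R[G]) :
    ∃ c : ι → R[L], z = ∑ i, mapDomainRingHom R L.subtype (c i) * single (g i) 1 := by
  classical
  induction z using induction_linear with
  | zero => exact ⟨0, by simp⟩
  | add x y hx hy =>
    obtain ⟨a, rfl⟩ := hx
    obtain ⟨b, rfl⟩ := hy
    exact ⟨a + b, by simp only [Pi.add_apply, map_add, add_mul, Finset.sum_add_distrib]⟩
  | single x r =>
    obtain ⟨⟨l, j⟩, rfl⟩ := hsurj x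
    refine ⟨Pi.single j (single l r), ?_⟩
    rw [sum_mapDomain_pi_single_mul_single, mapDomainRingHom_apply, mapDomain_single,
      single_mul_single, mul_one]
    rfl

lemma sum_mapDomain_cosetCoeff_mul_single
    (hg : Function.Bijective fun p : L × ι => (p.1 : G) * g p.2) (z : R[G]) :
    ∑ j, mapDomainRingHom R L.subtype (cosetCoeff L g j z) * single (g j) 1 = z := by
  obtain ⟨c, rfl⟩ := exists_eq_sum_mapDomain_mul_single hg.2 z
  simp only [cosetCoeff_sum_mapDomain_mul_single hg.1]

lemma single_mul_eq_sum_restrictionMatrix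
    (hg : Function.Bijective fun p : L × ι => (p.1 : G) * g p.2) (z : R[G]) (k : ι) :
    single (g k) 1 * z =
      ∑ j, mapDomainRingHom R L.subtype (restrictionMatrix L g z k j) * single (g j) 1 :=
  (sum_mapDomain_cosetCoeff_mul_single hg _).symm

lemma eq_restrictionMatrix_of_single_mul_eq
    (hinj : Function.Injective fun p : L × ι => (p.1 : G) * g p.2) {z : R[G]} {k : ι}
    {c : ι → R[L]}
    (h : single (g k) 1 * z = ∑ j, mapDomainRingHom R L.subtype (c j) * single (g j) 1) :
    c = restrictionMatrix L g z k := by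
  funext j
  simp only [restrictionMatrix, Matrix.of_apply, h, cosetCoeff_sum_mapDomain_mul_single hinj]

lemma sum_mapDomain_mul_single_mul
    (hg : Function.Bijective fun p : L × ι => (p.1 : G) * g p.2) (c : ι → R[L]) (z : R[G]) :
    (∑ j, mapDomainRingHom R L.subtype (c j) * single (g j) 1) * z =
      ∑ i, mapDomainRingHom R L.subtype ((c ᵥ* restrictionMatrix L g z) i) * single (g i) 1 :=
  calc _ = ∑ j, mapDomainRingHom R L.subtype (c j) * (single (g j) 1 * z) := by
        simp only [Finset.sum_mul, mul_assoc]
    _ = ∑ j, ∑ i, mapDomainRingHom R L.subtype (c j * restrictionMatrix L g z j i) *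
          single (g i) 1 := by
        simp only [single_mul_eq_sum_restrictionMatrix hg, Finset.mul_sum, map_mul, mul_assoc]
    _ = _ := by
        rw [Finset.sum_comm]
        simp only [Matrix.vecMul, dotProduct, map_sum, Finset.sum_mul]

lemma restrictionMatrix_mul (hg : Function.Bijective fun p : L × ι => (p.1 : G) * g p.2)
    (z₁ z₂ : R[G]) :
    restrictionMatrix L g (z₁ * z₂) =
      restrictionMatrix L g z₁ * restrictionMatrix L g z₂ := by
  funext k
  rw [Matrix.mul_apply_eq_vecMul]
  refine (eq_restrictionMatrix_of_single_mul_eq hg.1 ?_).symm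
  rw [← mul_assoc, single_mul_eq_sum_restrictionMatrix hg, sum_mapDomain_mul_single_mul hg]

lemma restrictionMatrix_one [DecidableEq ι]
    (hinj : Function.Injective fun p : L × ι => (p.1 : G) * g p.2) :
    restrictionMatrix L g (1 : R[G]) = 1 := by
  funext k
  have hexp : single (g k) 1 * 1 =
      ∑ j, mapDomainRingHom R L.subtype ((Pi.single k 1 : ι → R[L]) j) * single (g j) 1 := by
    rw [sum_mapDomain_pi_single_mul_single, map_one, one_mul, mul_one]
  rw [← eq_restrictionMatrix_of_single_mul_eq hinj hexp]
  funext j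
  exact Matrix.one_eq_pi_single.symm

lemma restrictionMatrix_single_row [DecidableEq ι]
    (hinj : Function.Injective fun p : L × ι => (p.1 : G) * g p.2) {h : G} {k j : ι} {l : L}
    (hl : (l : G) * g j = g k * h) :
    restrictionMatrix L g (single h (1 : R)) k = Pi.single j (single l 1) := by
  refine (eq_restrictionMatrix_of_single_mul_eq hinj ?_).symm
  rw [sum_mapDomain_pi_single_mul_single, mapDomainRingHom_apply, mapDomain_single,
    single_mul_single, single_mul_single, mul_one]
  exact congrArg (single · 1) hl.symm

lemma restrictionMatrix_single_apply_of_mul_eq [DecidableEq ι]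
    (hinj : Function.Injective fun p : L × ι => (p.1 : G) * g p.2) {h : G} {k j : ι} {l : L}
    (hl : (l : G) * g j = g k * h) :
    restrictionMatrix L g (single h (1 : R)) k j = single l 1 := by
  rw [restrictionMatrix_single_row hinj hl, Pi.single_eq_same]

lemma exists_mul_eq_of_restrictionMatrix_single_apply_ne_zero
    (hg : Function.Bijective fun p : L × ι => (p.1 : G) * g p.2) {h : G} {k j : ι}
    (hkj : restrictionMatrix L g (single h (1 : R)) k j ≠ 0) :
    ∃ l : L, (l : G) * g j = g k * h := by
  classical
  obtain ⟨⟨l, j₀⟩, hl⟩ := hg.2 (g k * h)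
  obtain rfl : j = j₀ := by
    by_contra hj
    rw [restrictionMatrix_single_row hg.1 hl, Pi.single_eq_of_ne hj] at hkj
    exact hkj rfl
  exact ⟨l, hl⟩

lemma restrictionMatrix_single_apply_ne_zero_iff [Nontrivial R]
    (hg : Function.Bijective fun p : L × ι => (p.1 : G) * g p.2) {h : G} {k j : ι} :
    restrictionMatrix L g (single h (1 : R)) k j ≠ 0 ↔ ∃ l : L, (l : G) * g j = g k * h := by
  classical
  refine ⟨exists_mul_eq_of_restrictionMatrix_single_apply_ne_zero hg, fun ⟨l, hl⟩ => ?_⟩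
  rw [restrictionMatrix_single_apply_of_mul_eq hg.1 hl]
  exact single_ne_zero.mpr one_ne_zero

end MonoidAlgebra

open scoped Classical

open MonoidAlgebra in
theorem restriction_matrix_representation_general {G : Type*} [Group G] (L : Subgroup G)
    (d : ℕ) (g : Fin d → G)
    (hg : Function.Bijective fun p : L × Fin d => (p.1 : G) * g p.2) :
    ∃ Λ : MonoidAlgebra ℤ G → Matrix (Fin d) (Fin d) (MonoidAlgebra ℤ L),
      -- (a) existence of the defining expansion
      (∀ (z : MonoidAlgebra ℤ G) (k : Fin d),
        MonoidAlgebra.single (g k) (1 : ℤ) * z =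
          ∑ j : Fin d, (MonoidAlgebra.mapDomainRingHom ℤ L.subtype) (Λ z k j) *
            MonoidAlgebra.single (g j) (1 : ℤ)) ∧
      -- (a) uniqueness of the coefficients
      (∀ (z : MonoidAlgebra ℤ G) (k : Fin d) (c : Fin d → MonoidAlgebra ℤ L),
        (MonoidAlgebra.single (g k) (1 : ℤ) * z =
          ∑ j : Fin d, (MonoidAlgebra.mapDomainRingHom ℤ L.subtype) (c j) *
            MonoidAlgebra.single (g j) (1 : ℤ)) → c = Λ z k) ∧
      -- (b) Λ is a ring homomorphism
      (∀ z₁ z₂ : MonoidAlgebra ℤ G, Λ (z₁ + z₂) = Λ z₁ + Λ z₂) ∧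
      (∀ z₁ z₂ : MonoidAlgebra ℤ G, Λ (z₁ * z₂) = Λ z₁ * Λ z₂) ∧
      (Λ 1 = 1) ∧
      -- (c) rows and columns of Λ (single h 1) have exactly one nonzero entry
      (∀ (h : G) (k : Fin d), ∃! j : Fin d, Λ (MonoidAlgebra.single h (1 : ℤ)) k j ≠ 0) ∧
      (∀ (h : G) (j : Fin d), ∃! k : Fin d, Λ (MonoidAlgebra.single h (1 : ℤ)) k j ≠ 0) ∧
      -- (c) and every nonzero entry is a group element of L
      (∀ (h : G) (k j : Fin d), Λ (MonoidAlgebra.single h (1 : ℤ)) k j ≠ 0 →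
        ∃ l : L, Λ (MonoidAlgebra.single h (1 : ℤ)) k j = MonoidAlgebra.single l (1 : ℤ)) := by
  refine ⟨restrictionMatrix L g, single_mul_eq_sum_restrictionMatrix hg,
    fun _ _ _ => eq_restrictionMatrix_of_single_mul_eq hg.1, restrictionMatrix_add,
    restrictionMatrix_mul hg, restrictionMatrix_one hg.1,
    fun h k => ?rows, fun h j => ?columns, fun h k j hkj => ?entries⟩
  case rows =>
    simpa only [restrictionMatrix_single_apply_ne_zero_iff hg] using
      Subgroup.existsUnique_transversal_index hg (g k * h)
  case columns =>
    simpa only [restrictionMatrix_single_apply_ne_zero_iff hg] using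
      Subgroup.existsUnique_transversal_index_mul_right hg h j
  case entries =>
    obtain ⟨l, hl⟩ := exists_mul_eq_of_restrictionMatrix_single_apply_ne_zero hg hkj
    exact ⟨l, restrictionMatrix_single_apply_of_mul_eq hg.1 hl⟩

/-- The matrix representation `Λ` of right multiplication on the free
`(MonoidAlgebra ℤ L)`-module `MonoidAlgebra ℤ G` with basis a complete transversal
`g : Fin d → G` of the right cosets of `L`: existence, uniqueness, ring-homomorphism
properties, and the monomial (permutation-matrix) structure on group elements. -/
theorem restriction_matrix_representation {G : Type*} [Group G] (L : Subgroup G)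
    (d : ℕ) (hd : 1 ≤ d) (g : Fin d → G)
    (hg : Function.Bijective fun p : L × Fin d => (p.1 : G) * g p.2) :
    ∃ Λ : MonoidAlgebra ℤ G → Matrix (Fin d) (Fin d) (MonoidAlgebra ℤ L),
      -- (a) existence of the defining expansion
      (∀ (z : MonoidAlgebra ℤ G) (k : Fin d),
        MonoidAlgebra.single (g k) (1 : ℤ) * z =
          ∑ j : Fin d, (MonoidAlgebra.mapDomainRingHom ℤ L.subtype) (Λ z k j) *
            MonoidAlgebra.single (g j) (1 : ℤ)) ∧
      -- (a) uniqueness of the coefficients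
      (∀ (z : MonoidAlgebra ℤ G) (k : Fin d) (c : Fin d → MonoidAlgebra ℤ L),
        (MonoidAlgebra.single (g k) (1 : ℤ) * z =
          ∑ j : Fin d, (MonoidAlgebra.mapDomainRingHom ℤ L.subtype) (c j) *
            MonoidAlgebra.single (g j) (1 : ℤ)) → c = Λ z k) ∧
      -- (b) Λ is a ring homomorphism
      (∀ z₁ z₂ : MonoidAlgebra ℤ G, Λ (z₁ + z₂) = Λ z₁ + Λ z₂) ∧
      (∀ z₁ z₂ : MonoidAlgebra ℤ G, Λ (z₁ * z₂) = Λ z₁ * Λ z₂) ∧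
      (Λ 1 = 1) ∧
      -- (c) rows and columns of Λ (single h 1) have exactly one nonzero entry
      (∀ (h : G) (k : Fin d), ∃! j : Fin d, Λ (MonoidAlgebra.single h (1 : ℤ)) k j ≠ 0) ∧
      (∀ (h : G) (j : Fin d), ∃! k : Fin d, Λ (MonoidAlgebra.single h (1 : ℤ)) k j ≠ 0) ∧
      -- (c) and every nonzero entry is a group element of L
      (∀ (h : G) (k j : Fin d), Λ (MonoidAlgebra.single h (1 : ℤ)) k j ≠ 0 →
        ∃ l : L, Λ (MonoidAlgebra.single h (1 : ℤ)) k j = MonoidAlgebra.single l (1 : ℤ)) :=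
  restriction_matrix_representation_general L d g hg
end

section
/- Let G be a group, L a subgroup of G, d ≥ 1, and g : Fin d → G a complete transversal of the right cosets of L. Let φ : G → ℝ be a group homomorphism into the additive reals. Suppose z is a nonzero φ-pure element of MonoidAlgebra ℤ G with δ_φ(z) = δ. Then for all k, j : Fin d, every element l of L lying in the support of Λ(z) k j satisfies φ(l) = δ + φ(g k) − φ(g j). -/
/-!
Left multiplication by `single (g k) 1` shifts coefficients, so the coefficient of `z` at
`(g k)⁻¹ * (l * g j)` is that of `single (g k) 1 * z` at `l * g j`. Since the cosets `L * g i`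
are pairwise disjoint, only the summand `i = j` of the expansion contributes there, and it
contributes the coefficient of `Λ k j` at `l`. Hence `(g k)⁻¹ * l * g j` lies in the support of
`z`, on which purity makes `φ` constantly `δ`; additivity of `φ` finishes the computation.
-/

open scoped Classical

open MonoidAlgebra

lemma apply_inv_mul_of_map_mul {G A : Type*} [Group G] [AddCommGroup A] {φ : G → A}
    (hφ : ∀ x y : G, φ (x * y) = φ x + φ y) (a b : G) : φ (a⁻¹ * b) = φ b - φ a :=
  eq_sub_of_add_eq' (by rw [← hφ, mul_inv_cancel_left])

lemma eq_deltaPhi_of_leadPhi_eq_self {G : Type*} [Group G] {φ : G → ℝ}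
    {a : MonoidAlgebra ℤ G} (ha : leadPhi φ a = a) {x : G} (hx : x ∈ a.coeff.support) :
    φ x = deltaPhi φ a := by
  by_contra hne
  have hcoeff : (leadPhi φ a).coeff x = a.coeff x := by rw [ha]
  rw [leadPhi, coeff_ofCoeff,
    Finsupp.filter_apply_neg (fun y => φ y = deltaPhi φ a) _ hne] at hcoeff
  exact Finsupp.mem_support_iff.mp hx hcoeff.symm

lemma coeff_sum_mapDomainRingHom_subtype_mul_single {R G ι : Type*} [Semiring R] [Group G]
    [Fintype ι] {L : Subgroup G} {g : ι → G}
    (hg : Function.Injective fun p : L × ι => (p.1 : G) * g p.2)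
    (a : ι → MonoidAlgebra R L) (l : L) (j : ι) :
    (∑ i, mapDomainRingHom R L.subtype (a i) * single (g i) 1).coeff (l * g j) =
      (a j).coeff l := by
  rw [coeff_sum, Finset.sum_apply', Finset.sum_eq_single j]
  · rw [coeff_mul_single_apply, mul_inv_cancel_right, mul_one]
    exact Finsupp.mapDomain_apply L.subtype_injective (a j).coeff l
  · intro i _ hij
    rw [coeff_mul_single_apply, mul_one]
    refine Finsupp.mapDomain_of_notMem_range (a i).coeff _ ?_
    rintro ⟨l', hl'⟩
    have hcoset : (l' : G) * g i = l * g j := by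
      rw [L.subtype_apply] at hl'
      rw [hl', inv_mul_cancel_right]
    exact hij (congrArg Prod.snd (@hg (l', i) (l, j) hcoset))
  · exact fun hj => absurd (Finset.mem_univ j) hj

theorem support_of_restriction_entries_of_pure_general {G : Type*} [Group G] (L : Subgroup G)
    (d : ℕ) (g : Fin d → G)
    (hg : Function.Bijective fun p : L × Fin d => (p.1 : G) * g p.2)
    (φ : G → ℝ) (hφ : ∀ x y : G, φ (x * y) = φ x + φ y)
    (z : MonoidAlgebra ℤ G) (hpure : leadPhi φ z = z)
    (δ : ℝ) (hδ : deltaPhi φ z = δ)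
    (Λ : Fin d → Fin d → MonoidAlgebra ℤ L)
    (hΛ : ∀ k : Fin d,
      MonoidAlgebra.single (g k) (1 : ℤ) * z =
        ∑ j : Fin d, (MonoidAlgebra.mapDomainRingHom ℤ L.subtype) (Λ k j) *
          MonoidAlgebra.single (g j) (1 : ℤ)) :
    ∀ (k j : Fin d), ∀ l ∈ (Λ k j).coeff.support, φ (l : G) = δ + φ (g k) - φ (g j) := by
  intro k j l hl
  have hcoeff : z.coeff ((g k)⁻¹ * (l * g j)) = (Λ k j).coeff l := by
    rw [← one_mul (z.coeff _), ← coeff_single_mul_apply, hΛ k,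
      coeff_sum_mapDomainRingHom_subtype_mul_single hg.injective]
  have hmem : (g k)⁻¹ * (l * g j) ∈ z.coeff.support := by
    rwa [Finsupp.mem_support_iff, hcoeff, ← Finsupp.mem_support_iff]
  have hφl := eq_deltaPhi_of_leadPhi_eq_self hpure hmem
  rw [apply_inv_mul_of_map_mul hφ, hφ, hδ] at hφl
  linarith

/-- If `z` is a nonzero `φ`-pure element of the integral group ring of `G` with
`δ_φ(z) = δ`, and `Λ z k j` are the matrix coefficients of right multiplication by `z`
with respect to a complete transversal `g` of the right cosets of `L`, then every
element `l` of `L` in the support of `Λ z k j` satisfies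
`φ l = δ + φ (g k) - φ (g j)`. -/
theorem support_of_restriction_entries_of_pure {G : Type*} [Group G] (L : Subgroup G)
    (d : ℕ) (hd : 1 ≤ d) (g : Fin d → G)
    (hg : Function.Bijective fun p : L × Fin d => (p.1 : G) * g p.2)
    (φ : G → ℝ) (hφ : ∀ x y : G, φ (x * y) = φ x + φ y)
    (z : MonoidAlgebra ℤ G) (hz : z ≠ 0) (hpure : leadPhi φ z = z)
    (δ : ℝ) (hδ : deltaPhi φ z = δ)
    (Λ : Fin d → Fin d → MonoidAlgebra ℤ L)
    (hΛ : ∀ k : Fin d,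
      MonoidAlgebra.single (g k) (1 : ℤ) * z =
        ∑ j : Fin d, (MonoidAlgebra.mapDomainRingHom ℤ L.subtype) (Λ k j) *
          MonoidAlgebra.single (g j) (1 : ℤ)) :
    ∀ (k j : Fin d), ∀ l ∈ (Λ k j).coeff.support, φ (l : G) = δ + φ (g k) - φ (g j) :=
  support_of_restriction_entries_of_pure_general L d g hg φ hφ z hpure δ hδ Λ hΛ
end

section
/- Let E be a real vector space, φ : E → ℝ a linear functional, and S a nonempty finite subset of E. Let m be the minimum of φ over S. Then every x in the convex hull convexHull ℝ S satisfies φ(x) ≥ m, and {x ∈ convexHull ℝ S | φ x = m} = convexHull ℝ {s ∈ S | φ s = m}. -/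
/-- The face of the convex hull of a finite set `S` determined by a linear functional `φ`
is the convex hull of the `φ`-minimizing points of `S`. -/
theorem face_convexHull_finset {E : Type*} [AddCommGroup E] [Module ℝ E] (φ : E →ₗ[ℝ] ℝ)
    (S : Finset E) (hS : S.Nonempty) (m : ℝ)
    (hle : ∀ s ∈ S, m ≤ φ s) (hmem : ∃ s ∈ S, φ s = m) :
    (∀ x ∈ convexHull ℝ (S : Set E), m ≤ φ x) ∧
    {x ∈ convexHull ℝ (S : Set E) | φ x = m} =
      convexHull ℝ {s : E | s ∈ S ∧ φ s = m} := by
  have hgen : ∀ x ∈ convexHull ℝ (S : Set E), m ≤ φ x := by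
    intro x hx
    have hconv : Convex ℝ {w : E | m ≤ φ w} := convex_halfSpace_ge φ.isLinear m
    exact convexHull_min (fun s hs => hle s hs) hconv hx
  refine ⟨hgen, ?_⟩
  set T : Finset E := S.filter (fun s => φ s = m) with hT
  have hTset : {s : E | s ∈ S ∧ φ s = m} = (T : Set E) := by
    ext s; simp [hT]
  rw [hTset]
  apply Set.Subset.antisymm
  · rintro x ⟨hx, hxm⟩
    rw [Finset.mem_convexHull'] at hx ⊢
    obtain ⟨w, hw₀, hw₁, hwx⟩ := hx
    -- key: weights vanish off T
    have hsum0 : ∑ y ∈ S, w y * (φ y - m) = 0 := by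
      have hφx : ∑ y ∈ S, w y * φ y = m := by
        have := congrArg φ hwx
        rw [map_sum] at this
        simpa [hxm] using this
      have : ∑ y ∈ S, w y * (φ y - m) = (∑ y ∈ S, w y * φ y) - (∑ y ∈ S, w y) * m := by
        rw [Finset.sum_mul, ← Finset.sum_sub_distrib]
        congr 1; ext y; ring
      rw [this, hφx, hw₁, one_mul, sub_self]
    have hzero : ∀ y ∈ S, w y * (φ y - m) = 0 := by
      intro y hy
      have hnn : ∀ y ∈ S, 0 ≤ w y * (φ y - m) := fun y hy =>
        mul_nonneg (hw₀ y hy) (sub_nonneg.2 (hle y hy))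
      exact (Finset.sum_eq_zero_iff_of_nonneg hnn).1 hsum0 y hy
    have hoff : ∀ y ∈ S, y ∉ T → w y = 0 := by
      intro y hy hyT
      have hne : φ y ≠ m := by
        intro h; exact hyT (by simp [hT, hy, h])
      rcases mul_eq_zero.1 (hzero y hy) with h | h
      · exact h
      · exact absurd (by linarith [sub_eq_zero.1 h]) hne
    refine ⟨w, fun y hy => hw₀ y (Finset.mem_filter.1 hy).1, ?_, ?_⟩
    · rw [← hw₁]
      exact (Finset.sum_subset (Finset.filter_subset _ _) hoff).symm ▸ rfl
    · rw [← hwx]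
      exact Finset.sum_subset (Finset.filter_subset _ _) (fun y hy hyT => by
        rw [hoff y hy hyT, zero_smul])
  · intro x hx
    have hsub : (T : Set E) ⊆ (S : Set E) := by
      intro s hs; exact Finset.filter_subset _ _ hs
    refine ⟨convexHull_mono hsub hx, ?_⟩
    have hconv : Convex ℝ {w : E | φ w = m} := convex_hyperplane φ.isLinear m
    exact convexHull_min (fun s hs => (Finset.mem_filter.1 hs).2) hconv hx
end

section
/- Let n ≥ 1 and let φ : FreeGroup (Fin n) →* FreeGroup (Fin n) be a group homomorphism that is not injective. Let D be a family of Fox derivatives on FreeGroup (Fin n). Then there exists U : Fin n → MonoidAlgebra ℤ (FreeGroup (Fin n)) with U ≠ 0 such that for every j : Fin n, Σ_i (U i) * (D j (φ (FreeGroup.of i))) = 0 in MonoidAlgebra ℤ (FreeGroup (Fin n)). Consequently, for every division ring K and every injective ring homomorphism ι : MonoidAlgebra ℤ (FreeGroup (Fin n)) → K, the n × n matrix over K whose (i,j) entry is ι(D j (φ (FreeGroup.of i))) is not invertible. -/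
/-- A family of Fox derivatives on the free group `FreeGroup (Fin m)`:
`D j (of i) = δᵢⱼ` and the Fox product rule. -/
def IsFoxDerivative {m : ℕ}
    (D : Fin m → FreeGroup (Fin m) → MonoidAlgebra ℤ (FreeGroup (Fin m))) : Prop :=
  (∀ i j : Fin m, D j (FreeGroup.of i) = if i = j then 1 else 0) ∧
  (∀ (j : Fin m) (u v : FreeGroup (Fin m)),
    D j (u * v) = D j u + (MonoidAlgebra.of ℤ (FreeGroup (Fin m)) u) * D j v)

/-
Fox's chain rule `∂ⱼ(φ w) = ∑ᵢ φ(∂ᵢ w) · ∂ⱼ(φ xᵢ)` shows that every `w ∈ ker φ` gives a left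
kernel vector `Uᵢ = φ(∂ᵢ w)` of the Fox Jacobian; the work is to choose `w` with `U ≠ 0`.
Take `w ≠ 1` in `ker φ` of minimal length. No proper nonempty prefix of `w` lies in `ker φ`, so
the coefficient of `1` in `φ(∂ₓ w)` only sees the empty prefix and `w` itself: it is
`[w starts with x] - [w ends with x⁻¹]`. Minimality also makes `w` cyclically reduced, so this is
nonzero for the first letter of `w` if that letter is positive; otherwise the cyclic rotation
moving the first letter to the end is again a minimal kernel element, now ending in `x⁻¹`.
-/

open FreeGroup
open MonoidAlgebra (mapDomainRingHom)

theorem MonoidAlgebra.mapDomainRingHom_of {R M N : Type*} [Semiring R] [Monoid M] [Monoid N]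
    (f : M →* N) (g : M) :
    mapDomainRingHom R f (MonoidAlgebra.of R M g) = MonoidAlgebra.of R N (f g) := by
  simp

def IsLeftDerivation {G R : Type*} [Monoid G] [Ring R] (ρ : G →* R) (d : G → R) : Prop :=
  ∀ u v, d (u * v) = d u + ρ u * d v

namespace IsLeftDerivation

variable {G R : Type*} [Group G] [Ring R] {ρ : G →* R} {d : G → R}

theorem map_one (hd : IsLeftDerivation ρ d) : d 1 = 0 := by
  simpa using hd 1 1

theorem map_inv (hd : IsLeftDerivation ρ d) (g : G) : d g⁻¹ = -(ρ g⁻¹ * d g) := by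
  have h := hd g⁻¹ g
  rw [inv_mul_cancel, hd.map_one] at h
  exact eq_neg_of_add_eq_zero_left h.symm

theorem freeGroup_ext {α : Type*} {ρ : FreeGroup α →* R} {d d' : FreeGroup α → R}
    (hd : IsLeftDerivation ρ d) (hd' : IsLeftDerivation ρ d') (h : ∀ a, d (of a) = d' (of a)) :
    d = d' := by
  funext g
  induction g using FreeGroup.induction_on with
  | C1 => rw [hd.map_one, hd'.map_one]
  | of a => exact h a
  | inv_of a _ => rw [hd.map_inv, hd'.map_inv, h]
  | mul u v hu hv => rw [hd, hd', hu, hv]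

end IsLeftDerivation

namespace IsFoxDerivative

variable {m : ℕ} {D : Fin m → FreeGroup (Fin m) → MonoidAlgebra ℤ (FreeGroup (Fin m))}

theorem isLeftDerivation (hD : IsFoxDerivative D) (j : Fin m) :
    IsLeftDerivation (MonoidAlgebra.of ℤ _) (D j) :=
  hD.2 j

theorem apply_map {k : ℕ}
    {D' : Fin k → FreeGroup (Fin k) → MonoidAlgebra ℤ (FreeGroup (Fin k))}
    (hD : IsFoxDerivative D) (hD' : IsFoxDerivative D')
    (φ : FreeGroup (Fin m) →* FreeGroup (Fin k)) (j : Fin k) (g : FreeGroup (Fin m)) :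
    D' j (φ g) = ∑ i, mapDomainRingHom ℤ φ (D i g) * D' j (φ (of i)) := by
  refine congrFun (IsLeftDerivation.freeGroup_ext (ρ := (MonoidAlgebra.of ℤ _).comp φ)
    (d := fun g => D' j (φ g))
    (d' := fun g => ∑ i, mapDomainRingHom ℤ φ (D i g) * D' j (φ (of i))) ?_ ?_ ?_) g
  · intro u v
    simp [hD'.2]
  · intro u v
    simp only [hD.2, map_add, _root_.map_mul, MonoidAlgebra.mapDomainRingHom_of, add_mul,
      Finset.sum_add_distrib, Finset.mul_sum, mul_assoc, MonoidHom.comp_apply]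
  · intro a
    simp [hD.1]

end IsFoxDerivative

namespace FreeGroup

variable {α G : Type*} [Group G] {ψ : FreeGroup α →* G} {L : List (α × Bool)}

theorem IsReduced.mk_ne_one (hL : IsReduced L) (hne : L ≠ []) : mk L ≠ 1 := by
  classical
  intro h
  rw [← hL.reduce_eq, ← toWord_mk, h, toWord_one] at hne
  exact hne rfl

structure IsMinimalKernelWord (ψ : FreeGroup α →* G) (L : List (α × Bool)) : Prop where
  intro ::
  isReduced : IsReduced L
  ne_nil : L ≠ []
  map_mk : ψ (mk L) = 1
  length_le : ∀ L', IsReduced L' → L' ≠ [] → ψ (mk L') = 1 → L.length ≤ L'.length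

theorem exists_isMinimalKernelWord (hψ : ¬ Function.Injective ψ) :
    ∃ L, IsMinimalKernelWord ψ L := by
  classical
  obtain ⟨a, b, hab, hne⟩ := Function.not_injective_iff.mp hψ
  have hw : (a * b⁻¹).toWord ∈ {L | IsReduced L ∧ L ≠ [] ∧ ψ (mk L) = 1} :=
    ⟨isReduced_toWord, by simpa [toWord_eq_nil_iff, mul_inv_eq_one] using hne,
      by rw [mk_toWord, _root_.map_mul, _root_.map_inv, hab, mul_inv_cancel]⟩
  obtain ⟨L, ⟨hred, hL, hker⟩, hmin⟩ := (measure List.length).wf.has_min _ ⟨_, hw⟩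
  exact ⟨L, hred, hL, hker, fun L' h₁ h₂ h₃ => not_lt.mp (hmin L' ⟨h₁, h₂, h₃⟩)⟩

namespace IsMinimalKernelWord

section

variable (h : IsMinimalKernelWord ψ L)
include h

theorem map_mk_ne_one_of_infix {M : List (α × Bool)} (hM : M <:+: L) (hne : M ≠ [])
    (hlt : M.length < L.length) : ψ (mk M) ≠ 1 :=
  fun hker => (h.length_le M (h.isReduced.infix hM) hne hker).not_gt hlt

theorem map_mk_take_ne_one {t : ℕ} (ht₀ : 0 < t) (ht : t < L.length) :
    ψ (mk (L.take t)) ≠ 1 :=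
  h.map_mk_ne_one_of_infix (L.take_prefix t).isInfix
    (by rw [Ne, List.take_eq_nil_iff]; simp [h.ne_nil]; omega) (by simp; omega)

theorem isCyclicallyReduced : IsCyclicallyReduced L := by
  obtain ⟨b, T, rfl⟩ := List.exists_cons_of_ne_nil h.ne_nil
  rcases List.eq_nil_or_concat' T with rfl | ⟨M, a, rfl⟩
  · exact .singleton
  rw [← List.cons_append] at h ⊢
  refine isCyclicallyReduced_cons_append_iff.mpr ⟨h.isReduced, fun h₁ => ?_⟩
  by_contra h₂
  have ha : mk [a] = (mk [b])⁻¹ := by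
    rw [inv_mk]
    simp only [invRev, List.reverse_singleton, List.map_singleton]
    exact congrArg (fun x => mk [x]) (Prod.ext h₁ (Bool.eq_not.mpr h₂))
  have hM : M ≠ [] := by
    rintro rfl
    have := h.isReduced
    simp only [List.cons_append, List.nil_append, isReduced_cons_cons] at this
    exact h₂ (this.1 h₁.symm).symm
  refine h.map_mk_ne_one_of_infix ⟨[b], [a], rfl⟩ hM (by simp) ?_
  have hL := h.map_mk
  rwa [← mul_mk, ha, ← List.singleton_append, ← mul_mk, _root_.map_mul, _root_.map_mul,
    _root_.map_inv, conj_eq_one_iff] at hL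

end

theorem rotate_cons {a : α × Bool} {T : List (α × Bool)} (h : IsMinimalKernelWord ψ (a :: T)) :
    IsMinimalKernelWord ψ (T ++ [a]) where
  isReduced := by
    rcases List.eq_nil_or_concat' T with rfl | ⟨M, c, rfl⟩
    · exact .singleton
    have hcyc := isCyclicallyReduced_cons_append_iff.mp h.isCyclicallyReduced
    refine hcyc.1.infix ⟨[a], [], by simp⟩ |>.append_overlap ?_ (List.cons_ne_nil c [])
    exact isReduced_cons_cons.mpr ⟨hcyc.2, .singleton⟩
  ne_nil := by simp
  map_mk := by
    have hconj : mk (T ++ [a]) = (mk [a])⁻¹ * mk ([a] ++ T) * mk [a] := by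
      rw [← mul_mk, ← mul_mk]
      group
    have hker : ψ (mk ([a] ++ T)) = 1 := h.map_mk
    rw [hconj, _root_.map_mul, _root_.map_mul, hker, mul_one, _root_.map_inv, inv_mul_cancel]
  length_le L' h₁ h₂ h₃ := by simpa using h.length_le L' h₁ h₂ h₃

end IsMinimalKernelWord

end FreeGroup

section KernelCoeff

variable {H G : Type*} [Monoid H] [Monoid G] (ψ : H →* G)

/-- The sum of the coefficients of `r` over `ker ψ`. -/
noncomputable def kernelCoeff (r : MonoidAlgebra ℤ H) : ℤ :=
  (mapDomainRingHom ℤ ψ r).coeff 1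

theorem kernelCoeff_zero : kernelCoeff ψ 0 = 0 := by
  simp [kernelCoeff]

theorem kernelCoeff_add (r s : MonoidAlgebra ℤ H) :
    kernelCoeff ψ (r + s) = kernelCoeff ψ r + kernelCoeff ψ s := by
  simp only [kernelCoeff, map_add, MonoidAlgebra.coeff_add, Finsupp.add_apply]

theorem kernelCoeff_sub (r s : MonoidAlgebra ℤ H) :
    kernelCoeff ψ (r - s) = kernelCoeff ψ r - kernelCoeff ψ s := by
  simp only [kernelCoeff, map_sub, MonoidAlgebra.coeff_sub, Finsupp.sub_apply]

theorem kernelCoeff_of [DecidableEq G] (g : H) :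
    kernelCoeff ψ (MonoidAlgebra.of ℤ H g) = if ψ g = 1 then 1 else 0 := by
  rw [kernelCoeff, MonoidAlgebra.mapDomainRingHom_of, MonoidAlgebra.of_apply,
    MonoidAlgebra.coeff_single, Finsupp.single_apply]

end KernelCoeff

namespace IsFoxDerivative

variable {m : ℕ} {D : Fin m → FreeGroup (Fin m) → MonoidAlgebra ℤ (FreeGroup (Fin m))}
  {G : Type*} [Group G] [DecidableEq G]

theorem kernelCoeff_apply_mul_of (hD : IsFoxDerivative D) (ψ : FreeGroup (Fin m) →* G)
    (x y : Fin m) (g : FreeGroup (Fin m)) :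
    kernelCoeff ψ (D x (g * of y)) =
      kernelCoeff ψ (D x g) + if y = x ∧ ψ g = 1 then 1 else 0 := by
  rw [hD.2, hD.1, kernelCoeff_add]
  by_cases hy : y = x
  · rw [if_pos hy, mul_one, kernelCoeff_of]
    simp [hy]
  · rw [if_neg hy, mul_zero, kernelCoeff_zero]
    simp [hy]

theorem kernelCoeff_apply_mul_of_inv (hD : IsFoxDerivative D) (ψ : FreeGroup (Fin m) →* G)
    (x y : Fin m) (g : FreeGroup (Fin m)) :
    kernelCoeff ψ (D x (g * (of y)⁻¹)) =
      kernelCoeff ψ (D x g) - if y = x ∧ ψ (g * (of y)⁻¹) = 1 then 1 else 0 := by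
  rw [hD.2, (hD.isLeftDerivation x).map_inv, hD.1]
  by_cases hy : y = x
  · rw [if_pos hy, mul_one, mul_neg, ← _root_.map_mul, ← sub_eq_add_neg, kernelCoeff_sub,
      kernelCoeff_of]
    simp [hy]
  · rw [if_neg hy, mul_zero, neg_zero, mul_zero, add_zero]
    simp [hy]

theorem kernelCoeff_apply_mk (hD : IsFoxDerivative D) (ψ : FreeGroup (Fin m) →* G)
    (x : Fin m) {L : List (Fin m × Bool)}
    (hL : ∀ t, 0 < t → t < L.length → ψ (mk (L.take t)) ≠ 1) :
    kernelCoeff ψ (D x (mk L)) =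
      (if L.head? = some (x, true) then 1 else 0) -
        if L.getLast? = some (x, false) ∧ ψ (mk L) = 1 then 1 else 0 := by
  induction L using List.reverseRecOn with
  | nil => simp [← one_eq_mk, (hD.isLeftDerivation x).map_one, kernelCoeff_zero]
  | append_singleton L a ih =>
    obtain ⟨y, b⟩ := a
    have hstep : kernelCoeff ψ (D x (mk (L ++ [(y, b)]))) = kernelCoeff ψ (D x (mk L)) +
        if y = x then (if b then (if ψ (mk L) = 1 then 1 else 0)
          else -(if ψ (mk (L ++ [(y, b)])) = 1 then 1 else 0)) else 0 := by
      rw [← mul_mk]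
      cases b
      · rw [show mk [(y, false)] = (of y)⁻¹ from rfl, hD.kernelCoeff_apply_mul_of_inv]
        split_ifs <;> simp_all [sub_eq_add_neg]
      · rw [show mk [(y, true)] = of y from rfl, hD.kernelCoeff_apply_mul_of]
        split_ifs <;> simp_all
    rw [hstep]
    rcases eq_or_ne L [] with rfl | hne
    · cases b <;> by_cases hy : y = x <;>
        simp [hy, ← one_eq_mk, (hD.isLeftDerivation x).map_one, kernelCoeff_zero]
    have hker : ψ (mk L) ≠ 1 := by
      simpa using hL L.length (List.length_pos_iff.mpr hne) (by simp)
    rw [ih fun t ht₀ ht => by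
      simpa [List.take_append_of_le_length ht.le] using hL t ht₀ (by simp; omega)]
    cases b <;> by_cases hy : y = x <;>
      simp [hy, hker, List.head?_append_of_ne_nil _ hne, sub_eq_add_neg]

end IsFoxDerivative

theorem FreeGroup.IsMinimalKernelWord.kernelCoeff_foxDerivative {m : ℕ} {G : Type*} [Group G]
    [DecidableEq G] {ψ : FreeGroup (Fin m) →* G} {L : List (Fin m × Bool)}
    {D : Fin m → FreeGroup (Fin m) → MonoidAlgebra ℤ (FreeGroup (Fin m))}
    (h : IsMinimalKernelWord ψ L) (hD : IsFoxDerivative D) (x : Fin m) :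
    kernelCoeff ψ (D x (mk L)) =
      (if L.head? = some (x, true) then 1 else 0) -
        if L.getLast? = some (x, false) then 1 else 0 := by
  simp [hD.kernelCoeff_apply_mk ψ x fun t => h.map_mk_take_ne_one, h.map_mk]

theorem IsFoxDerivative.exists_mapDomainRingHom_ne_zero {m : ℕ} {G : Type*} [Group G]
    {D : Fin m → FreeGroup (Fin m) → MonoidAlgebra ℤ (FreeGroup (Fin m))}
    (hD : IsFoxDerivative D) {ψ : FreeGroup (Fin m) →* G} (hψ : ¬ Function.Injective ψ) :
    ∃ w, ψ w = 1 ∧ ∃ x, mapDomainRingHom ℤ ψ (D x w) ≠ 0 := by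
  classical
  suffices ∃ L, IsMinimalKernelWord ψ L ∧ ∃ x, kernelCoeff ψ (D x (mk L)) ≠ 0 by
    obtain ⟨L, hL, x, hx⟩ := this
    refine ⟨mk L, hL.map_mk, x, fun h => hx ?_⟩
    rw [kernelCoeff, h]
    rfl
  obtain ⟨L, hL⟩ := exists_isMinimalKernelWord hψ
  obtain ⟨⟨z, _ | _⟩, T, rfl⟩ := List.exists_cons_of_ne_nil hL.ne_nil
  · have hL' := hL.rotate_cons
    refine ⟨_, hL', z, ?_⟩
    have hlast : (T ++ [(z, false)]).getLast? = some (z, false) := List.getLast?_concat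
    have hhead : (T ++ [(z, false)]).head? ≠ some (z, true) := fun hhead =>
      Bool.false_ne_true (hL'.isCyclicallyReduced.2 _ hlast _ hhead rfl)
    rw [hL'.kernelCoeff_foxDerivative hD, if_neg hhead, if_pos hlast]
    norm_num
  · refine ⟨_, hL, z, ?_⟩
    have hhead : ((z, true) :: T).head? = some (z, true) := rfl
    have hlast : ((z, true) :: T).getLast? ≠ some (z, false) := fun hlast =>
      Bool.false_ne_true (hL.isCyclicallyReduced.2 _ hlast _ hhead rfl)
    rw [hL.kernelCoeff_foxDerivative hD, if_pos hhead, if_neg hlast]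
    norm_num

namespace Matrix

theorem not_isUnit_map_of_vecMul_eq_zero {n R K : Type*} [Fintype n] [DecidableEq n]
    [Semiring R] [Semiring K] {f : R →+* K} (hf : Function.Injective f)
    {A : Matrix n n R} {v : n → R} (hv : v ≠ 0) (hvA : v ᵥ* A = 0) : ¬ IsUnit (A.map f) := by
  intro hA
  have hfv : (f ∘ v) ᵥ* A.map f = 0 ᵥ* A.map f := by
    ext j
    rw [← RingHom.map_vecMul, hvA, zero_vecMul, Pi.zero_apply, map_zero, Pi.zero_apply]
  refine hv (funext fun i => hf ?_)
  simpa using congrFun (vecMul_injective_of_isUnit hA hfv) i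

end Matrix

theorem fox_jacobian_not_injective_general (n : ℕ)
    (φ : FreeGroup (Fin n) →* FreeGroup (Fin n))
    (hφ : ¬ Function.Injective φ)
    (D : Fin n → FreeGroup (Fin n) → MonoidAlgebra ℤ (FreeGroup (Fin n)))
    (hD : IsFoxDerivative D) :
    ∃ U : Fin n → MonoidAlgebra ℤ (FreeGroup (Fin n)),
      U ≠ 0 ∧
      (∀ j : Fin n, ∑ i : Fin n, U i * D j (φ (FreeGroup.of i)) = 0) ∧
      (∀ (K : Type*) [DivisionRing K]
        (ι : MonoidAlgebra ℤ (FreeGroup (Fin n)) →+* K),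
        Function.Injective ι →
        ¬ IsUnit (Matrix.of fun i j : Fin n => ι (D j (φ (FreeGroup.of i))))) := by
  obtain ⟨w, hw, x, hx⟩ := hD.exists_mapDomainRingHom_ne_zero hφ
  set U := fun i => mapDomainRingHom ℤ φ (D i w)
  have hU : U ≠ 0 := fun h => hx (congrFun h x)
  have hUJ : ∀ j, ∑ i, U i * D j (φ (of i)) = 0 := fun j => by
    rw [← hD.apply_map hD φ j w, hw, (hD.isLeftDerivation j).map_one]
  exact ⟨U, hU, hUJ, fun K _ ι hι =>
    Matrix.not_isUnit_map_of_vecMul_eq_zero hι hU (funext hUJ)⟩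

/-- The Fox Jacobian of a non-injective endomorphism of a finitely generated free group
has a nontrivial left kernel over the integral group ring; consequently it is not
invertible over any division ring containing the group ring. -/
theorem fox_jacobian_not_injective (n : ℕ) (hn : 1 ≤ n)
    (φ : FreeGroup (Fin n) →* FreeGroup (Fin n))
    (hφ : ¬ Function.Injective φ)
    (D : Fin n → FreeGroup (Fin n) → MonoidAlgebra ℤ (FreeGroup (Fin n)))
    (hD : IsFoxDerivative D) :
    ∃ U : Fin n → MonoidAlgebra ℤ (FreeGroup (Fin n)),
      U ≠ 0 ∧
      (∀ j : Fin n, ∑ i : Fin n, U i * D j (φ (FreeGroup.of i)) = 0) ∧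
      (∀ (K : Type*) [DivisionRing K]
        (ι : MonoidAlgebra ℤ (FreeGroup (Fin n)) →+* K),
        Function.Injective ι →
        ¬ IsUnit (Matrix.of fun i j : Fin n => ι (D j (φ (FreeGroup.of i))))) :=
  fox_jacobian_not_injective_general n φ hφ D hD
end

section
/- Let α and β be types and let φ : FreeGroup α →* FreeGroup β be a group homomorphism. Suppose w ∈ FreeGroup α satisfies φ(w) = 1, w ≠ 1, and w has minimal length in the kernel: FreeGroup.norm w ≤ FreeGroup.norm v for every v ≠ 1 with φ(v) = 1. Let ℓ = FreeGroup.toWord w be the reduced word of w and k = ℓ.length. Then for all natural numbers p < q ≤ k with ¬(p = 0 ∧ q = k), the images φ(FreeGroup.mk (ℓ.take p)) and φ(FreeGroup.mk (ℓ.take q)) are distinct elements of FreeGroup β. -/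
/-!
If two prefixes `ℓ.take p` and `ℓ.take q` of the reduced word `ℓ` of `w` had the same image, the
segment `(ℓ.take q).drop p` between them would lie in the kernel. Either that segment is trivial,
and cutting it out of `ℓ` writes `w` with fewer than `ℓ.length` letters, contradicting that `ℓ`
is reduced; or it is a nontrivial kernel element with at most `q - p` letters, which by
minimality forces `p = 0` and `q = ℓ.length`.
-/

namespace FreeGroup

variable {α : Type*} {L : List (α × Bool)} {p q : ℕ}

theorem mk_take_mul_mk_drop_take (hpq : p ≤ q) :
    mk (L.take p) * mk ((L.take q).drop p) = mk (L.take q) := by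
  have := List.take_append_drop p (L.take q)
  rw [List.take_take, min_eq_left hpq] at this
  rw [mul_mk, this]

theorem mk_eq_mk_take_mul_mk_drop_take_mul_mk_drop (hpq : p ≤ q) :
    mk L = mk (L.take p) * mk ((L.take q).drop p) * mk (L.drop q) := by
  rw [mk_take_mul_mk_drop_take hpq, mul_mk, List.take_append_drop]

theorem map_mk_drop_take_eq_one {G : Type*} [Group G] (φ : FreeGroup α →* G) (hpq : p ≤ q)
    (h : φ (mk (L.take p)) = φ (mk (L.take q))) : φ (mk ((L.take q).drop p)) = 1 := by
  rwa [← mk_take_mul_mk_drop_take hpq, _root_.map_mul, left_eq_mul] at h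

theorem norm_mk_add_le_length_of_mk_drop_take_eq_one [DecidableEq α] (hpq : p ≤ q)
    (hq : q ≤ L.length) (h : mk ((L.take q).drop p) = 1) :
    norm (mk L) + (q - p) ≤ L.length := by
  have hcut : mk L = mk (L.take p ++ L.drop q) := by
    rw [mk_eq_mk_take_mul_mk_drop_take_mul_mk_drop hpq, h, mul_one, mul_mk]
  have hlen : (L.take p ++ L.drop q).length = p + (L.length - q) := by
    simp only [List.length_append, List.length_take, List.length_drop]
    omega
  have := hcut ▸ norm_mk_le (L₁ := L.take p ++ L.drop q)
  omega

end FreeGroup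

theorem prefixes_of_minimal_kernel_element_distinct_general {α β : Type*} [DecidableEq α]
    (φ : FreeGroup α →* FreeGroup β) (w : FreeGroup α)
    (hmin : ∀ v : FreeGroup α, v ≠ 1 → φ v = 1 → FreeGroup.norm w ≤ FreeGroup.norm v)
    (p q : ℕ) (hpq : p < q) (hq : q ≤ (FreeGroup.toWord w).length)
    (hne : ¬(p = 0 ∧ q = (FreeGroup.toWord w).length)) :
    φ (FreeGroup.mk ((FreeGroup.toWord w).take p)) ≠
      φ (FreeGroup.mk ((FreeGroup.toWord w).take q)) := by
  intro h
  set ℓ := FreeGroup.toWord w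
  have hnorm : FreeGroup.norm w = ℓ.length := rfl
  have hseg := FreeGroup.map_mk_drop_take_eq_one φ hpq.le h
  by_cases htriv : FreeGroup.mk ((ℓ.take q).drop p) = 1
  · have hcut := FreeGroup.norm_mk_add_le_length_of_mk_drop_take_eq_one hpq.le hq htriv
    rw [FreeGroup.mk_toWord] at hcut
    omega
  · have hlen : ((ℓ.take q).drop p).length = q - p := by
      simp only [List.length_drop, List.length_take]
      omega
    have hshort := hlen ▸ FreeGroup.norm_mk_le (L₁ := (ℓ.take q).drop p)
    have := hmin _ htriv hseg
    omega

/-- The proper prefixes of a minimal-length nontrivial element of the kernel of a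
homomorphism of free groups have pairwise distinct images. -/
theorem prefixes_of_minimal_kernel_element_distinct {α β : Type*} [DecidableEq α]
    (φ : FreeGroup α →* FreeGroup β) (w : FreeGroup α)
    (hker : φ w = 1) (hw : w ≠ 1)
    (hmin : ∀ v : FreeGroup α, v ≠ 1 → φ v = 1 → FreeGroup.norm w ≤ FreeGroup.norm v)
    (p q : ℕ) (hpq : p < q) (hq : q ≤ (FreeGroup.toWord w).length)
    (hne : ¬(p = 0 ∧ q = (FreeGroup.toWord w).length)) :
    φ (FreeGroup.mk ((FreeGroup.toWord w).take p)) ≠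
      φ (FreeGroup.mk ((FreeGroup.toWord w).take q)) :=
  prefixes_of_minimal_kernel_element_distinct_general φ w hmin p q hpq hq hne
end
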